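/- Let G be a simple graph on {1,…,n} containing no clique of size l. Then in the stepping-up 3-colouring of the triples of T = {0,1}^n, neither colour class C_1 nor colour class C_2 contains a monochromatic clique of size l+1; that is, there is no set of l+1 elements of T all of whose triples receive colour C_1, and none all of whose triples receive colour C_2. -/
import Mathlib


/-- `b(ε) = Σ_i ε_i · 2^i`, the number whose binary digits are given by `ε`. -/
def bval {n : ℕ} (ε : Fin n → Bool) : ℕ :=
  ∑ i, if ε i then 2 ^ (i : ℕ) else 0

/-- `δ(ε, ε')`: the largest coordinate at which `ε` and `ε'` differ. -/
def delta {n : ℕ} (ε ε' : Fin n → Bool) : ℕ :=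
  (Finset.univ.filter fun i => ε i ≠ ε' i).sup Fin.val

open scoped Classical in
/-- The stepping-up 3-colouring: for `ε₁ < ε₂ < ε₃` with `δ₁ = δ(ε₁,ε₂)` and
`δ₂ = δ(ε₂,ε₃)`, the triple gets colour `0` (`C₁`) if `{δ₁,δ₂} ∈ E(G)` and
`δ₁ < δ₂`, colour `1` (`C₂`) if `{δ₁,δ₂} ∈ E(G)` and `δ₁ > δ₂`, and colour `2`
(`C₃`) if `{δ₁,δ₂} ∉ E(G)`. -/
noncomputable def colour {n : ℕ} (G : SimpleGraph ℕ) (ε₁ ε₂ ε₃ : Fin n → Bool) : Fin 3 :=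
  if G.Adj (delta ε₁ ε₂) (delta ε₂ ε₃) then
    (if delta ε₁ ε₂ < delta ε₂ ε₃ then 0 else 1)
  else 2

lemma sum_two_pow_lt (d : ℕ) : ∑ j ∈ Finset.range d, 2^j < 2^d := by
  induction d with
  | zero => simp
  | succ d ih => rw [Finset.sum_range_succ, pow_succ]; omega

-- key comparison lemma
lemma bval_lt {n : ℕ} {ε ε' : Fin n → Bool} (d : Fin n) (h1 : ε d = false)
    (h2 : ε' d = true) (h3 : ∀ i, d < i → ε i = ε' i) : bval ε < bval ε' := by
  classical
  have split : ∀ η : Fin n → Bool, bval η =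
      (∑ i ∈ Finset.univ.filter (fun i => i < d), if η i then 2^(i:ℕ) else 0)
      + ((if η d then 2^(d:ℕ) else 0)
      + ∑ i ∈ Finset.univ.filter (fun i => d < i), if η i then 2^(i:ℕ) else 0) := by
    intro η
    rw [bval, ← Finset.sum_filter_add_sum_filter_not Finset.univ (fun i => i < d)]
    congr 1
    have : Finset.univ.filter (fun i : Fin n => ¬ i < d)
        = insert d (Finset.univ.filter (fun i => d < i)) := by
      ext i; simp [Finset.mem_filter, Finset.mem_insert]
      constructor
      · intro h; rcases eq_or_lt_of_le h with h' | h'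
        · left; exact h'.symm
        · right; exact h'
      · rintro (rfl | h); · exact le_refl _
        · exact le_of_lt h
    rw [this, Finset.sum_insert (by simp)]
  rw [split ε, split ε', h1, h2]
  have he : (∑ i ∈ Finset.univ.filter (fun i => d < i), if ε i then 2^(i:ℕ) else 0)
      = ∑ i ∈ Finset.univ.filter (fun i => d < i), if ε' i then 2^(i:ℕ) else 0 := by
    apply Finset.sum_congr rfl
    intro i hi
    rw [h3 i (Finset.mem_filter.mp hi).2]
  rw [he]
  simp only [Bool.false_eq_true, if_false, if_true]
  have hb : (∑ i ∈ Finset.univ.filter (fun i => i < d), if ε i then 2^(i:ℕ) else 0)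
      < 2 ^ (d:ℕ) := by
    calc (∑ i ∈ Finset.univ.filter (fun i => i < d), if ε i then 2^(i:ℕ) else 0)
        ≤ ∑ i ∈ Finset.univ.filter (fun i => i < d), 2^(i:ℕ) := by
          apply Finset.sum_le_sum; intro i _; split <;> simp
      _ = ∑ j ∈ Finset.range (d:ℕ), 2^j := by
          have himg : (Finset.univ.filter (fun i : Fin n => i < d)).image Fin.val
              = Finset.range (d:ℕ) := by
            ext j
            simp only [Finset.mem_image, Finset.mem_filter, Finset.mem_univ, true_and,
              Finset.mem_range, Fin.lt_def]
            constructor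
            · rintro ⟨i, hi, rfl⟩; exact hi
            · intro hj; exact ⟨⟨j, lt_trans hj d.isLt⟩, hj, rfl⟩
          rw [← himg, Finset.sum_image (fun a _ b _ h => Fin.val_injective h)]
      _ < 2^(d:ℕ) := sum_two_pow_lt _
  omega

lemma le_delta {n : ℕ} {ε ε' : Fin n → Bool} {i : Fin n} (h : ε i ≠ ε' i) :
    (i : ℕ) ≤ delta ε ε' := by
  classical
  exact Finset.le_sup (by simp [h])

lemma eq_of_delta_lt {n : ℕ} {ε ε' : Fin n → Bool} {i : Fin n}
    (h : delta ε ε' < (i : ℕ)) : ε i = ε' i := by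
  by_contra hne
  exact absurd (le_delta hne) (by omega)

lemma delta_spec {n : ℕ} {ε ε' : Fin n → Bool} (h : ε ≠ ε') :
    ∃ D : Fin n, (D : ℕ) = delta ε ε' ∧ ε D ≠ ε' D := by
  classical
  have hne : (Finset.univ.filter fun i => ε i ≠ ε' i).Nonempty := by
    rcases Function.ne_iff.mp h with ⟨i, hi⟩
    exact ⟨i, by simp [hi]⟩
  obtain ⟨D, hD, hsup⟩ := Finset.exists_mem_eq_sup _ hne Fin.val
  exact ⟨D, hsup.symm, by simpa using (Finset.mem_filter.mp hD).2⟩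

lemma bval_injective {n : ℕ} : Function.Injective (bval (n := n)) := by
  intro ε ε' h
  by_contra hne
  obtain ⟨D, hD, hval⟩ := delta_spec hne
  have hgt : ∀ i, D < i → ε i = ε' i := fun i hi =>
    eq_of_delta_lt (by rw [← hD]; exact_mod_cast hi)
  cases hε : ε D <;> cases hε' : ε' D
  · exact hval (by rw [hε, hε'])
  · exact absurd h (Nat.ne_of_lt (bval_lt D hε hε' hgt))
  · exact absurd h.symm (Nat.ne_of_lt (bval_lt D hε' hε fun i hi => (hgt i hi).symm))
  · exact hval (by rw [hε, hε'])

/-- When `bval ε < bval ε'`, at the top difference `ε` is `false` and `ε'` is `true`. -/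
lemma delta_spec_lt {n : ℕ} {ε ε' : Fin n → Bool} (h : bval ε < bval ε') :
    ∃ D : Fin n, (D : ℕ) = delta ε ε' ∧ ε D = false ∧ ε' D = true := by
  obtain ⟨D, hD, hval⟩ := delta_spec (fun he => absurd (congrArg bval he) (Nat.ne_of_lt h))
  have hgt : ∀ i, D < i → ε i = ε' i := fun i hi =>
    eq_of_delta_lt (by rw [← hD]; exact_mod_cast hi)
  refine ⟨D, hD, ?_⟩
  cases hε : ε D <;> cases hε' : ε' D
  · exact absurd rfl (by rw [hε, hε'] at hval; exact hval)
  · exact ⟨rfl, rfl⟩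
  · exact absurd h (by
      have := bval_lt D hε' hε fun i hi => (hgt i hi).symm
      omega)
  · exact absurd rfl (by rw [hε, hε'] at hval; exact hval)

lemma delta_three {n : ℕ} {ε₁ ε₂ ε₃ : Fin n → Bool} (h12 : bval ε₁ < bval ε₂)
    (h23 : bval ε₂ < bval ε₃) :
    delta ε₁ ε₂ ≠ delta ε₂ ε₃ ∧ delta ε₁ ε₃ = max (delta ε₁ ε₂) (delta ε₂ ε₃) := by
  obtain ⟨D1, hD1, h1f, h1t⟩ := delta_spec_lt h12
  obtain ⟨D2, hD2, h2f, h2t⟩ := delta_spec_lt h23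
  have hne : delta ε₁ ε₂ ≠ delta ε₂ ε₃ := by
    intro h
    have : D1 = D2 := Fin.val_injective (by rw [hD1, hD2, h])
    rw [this] at h1t; rw [h1t] at h2f; simp at h2f
  refine ⟨hne, ?_⟩
  have hle : delta ε₁ ε₃ ≤ max (delta ε₁ ε₂) (delta ε₂ ε₃) := by
    classical
    apply Finset.sup_le
    intro i hi
    have hi13 : ε₁ i ≠ ε₃ i := by simpa using (Finset.mem_filter.mp hi).2
    by_contra hc
    push_neg at hc
    have h12e : ε₁ i = ε₂ i := eq_of_delta_lt (lt_of_le_of_lt (le_max_left _ _) hc)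
    have h23e : ε₂ i = ε₃ i := eq_of_delta_lt (lt_of_le_of_lt (le_max_right _ _) hc)
    exact hi13 (h12e.trans h23e)
  rcases lt_or_gt_of_ne hne with hlt | hlt
  · -- max is delta ε₂ ε₃, attained at D2
    have h1e : ε₁ D2 = ε₂ D2 := eq_of_delta_lt (by rw [← hD2] at hlt; exact_mod_cast hlt)
    have : ε₁ D2 ≠ ε₃ D2 := by rw [h1e, h2f, h2t]; simp
    have hge := le_delta this
    rw [hD2] at hge
    omega
  · have h3e : ε₂ D1 = ε₃ D1 := eq_of_delta_lt (by rw [← hD1] at hlt; exact_mod_cast hlt)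
    have : ε₁ D1 ≠ ε₃ D1 := by rw [← h3e, h1f, h1t]; simp
    have hge := le_delta this
    rw [hD1] at hge
    omega

lemma make_clique {l : ℕ} (G : SimpleGraph ℕ) (hfree : G.CliqueFree l) (d : ℕ → ℕ)
    (adj : ∀ i j, i < j → j + 1 ≤ l → G.Adj (d i) (d j)) : False := by
  classical
  have hinj : Set.InjOn d (Finset.range l) := by
    intro i hi j hj h
    simp only [Finset.coe_range, Set.mem_Iio] at hi hj
    rcases lt_trichotomy i j with hij | hij | hij
    · exact absurd h (adj i j hij (by omega)).ne
    · exact hij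
    · exact absurd h.symm (adj j i hij (by omega)).ne
  apply hfree ((Finset.range l).image d)
  constructor
  · intro x hx y hy hxy
    simp only [Finset.coe_image, Set.mem_image, Finset.coe_range, Set.mem_Iio] at hx hy
    obtain ⟨i, hi, rfl⟩ := hx
    obtain ⟨j, hj, rfl⟩ := hy
    rcases lt_trichotomy i j with hij | hij | hij
    · exact adj i j hij (by omega)
    · exact absurd (by rw [hij]) hxy
    · exact (adj j i hij (by omega)).symm
  · rw [Finset.card_image_of_injOn (by simpa using hinj), Finset.card_range]

lemma aux0 {n l : ℕ} (G : SimpleGraph ℕ) (hfree : G.CliqueFree l)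
    (E : ℕ → (Fin n → Bool))
    (hmono : ∀ i j, i < j → j ≤ l → bval (E i) < bval (E j))
    (hcol : ∀ i j k, i < j → j < k → k ≤ l → colour G (E i) (E j) (E k) = 0) :
    False := by
  classical
  have step : ∀ m, m + 2 ≤ l →
      G.Adj (delta (E m) (E (m+1))) (delta (E (m+1)) (E (m+2)))
        ∧ delta (E m) (E (m+1)) < delta (E (m+1)) (E (m+2)) := by
    intro m hm
    have h := hcol m (m+1) (m+2) (by omega) (by omega) hm
    rw [colour] at h
    split_ifs at h with h1 h2
    · exact ⟨h1, h2⟩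
    · exact absurd h (by decide)
    · exact absurd h (by decide)
  have claim : ∀ a b, a ≤ b → b + 1 ≤ l →
      delta (E a) (E (b+1)) = delta (E b) (E (b+1)) := by
    intro a b hab
    induction b, hab using Nat.le_induction with
    | base => intro _; rfl
    | succ b hab ih =>
      intro hb
      have h1 : bval (E a) < bval (E (b+1)) := hmono _ _ (by omega) (by omega)
      have h2 : bval (E (b+1)) < bval (E (b+2)) := hmono _ _ (by omega) (by omega)
      have hmax := (delta_three h1 h2).2
      rw [ih (by omega)] at hmax
      show delta (E a) (E (b+2)) = delta (E (b+1)) (E (b+2))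
      rw [hmax, max_eq_right (le_of_lt (step b hb).2)]
  apply make_clique G hfree (fun m => delta (E m) (E (m+1)))
  intro i j hij hj
  have h := hcol i (i+1) (j+1) (by omega) (by omega) hj
  have hdel : delta (E (i+1)) (E (j+1)) = delta (E j) (E (j+1)) :=
    claim (i+1) j (by omega) hj
  rw [colour] at h
  split_ifs at h with h1 h2
  · rw [hdel] at h1; exact h1
  · rw [hdel] at h1; exact h1
  · exact absurd h (by decide)

lemma aux1 {n l : ℕ} (G : SimpleGraph ℕ) (hfree : G.CliqueFree l)
    (E : ℕ → (Fin n → Bool))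
    (hmono : ∀ i j, i < j → j ≤ l → bval (E i) < bval (E j))
    (hcol : ∀ i j k, i < j → j < k → k ≤ l → colour G (E i) (E j) (E k) = 1) :
    False := by
  classical
  have step : ∀ m, m + 2 ≤ l →
      G.Adj (delta (E m) (E (m+1))) (delta (E (m+1)) (E (m+2)))
        ∧ delta (E (m+1)) (E (m+2)) < delta (E m) (E (m+1)) := by
    intro m hm
    have h := hcol m (m+1) (m+2) (by omega) (by omega) hm
    have hne := (delta_three (hmono m (m+1) (by omega) (by omega))
      (hmono (m+1) (m+2) (by omega) (by omega))).1
    rw [colour] at h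
    split_ifs at h with h1 h2
    · exact absurd h (by decide)
    · exact ⟨h1, by omega⟩
    · exact absurd h (by decide)
  have dmono : ∀ a b, a ≤ b → b + 1 ≤ l →
      delta (E b) (E (b+1)) ≤ delta (E a) (E (a+1)) := by
    intro a b hab
    induction b, hab using Nat.le_induction with
    | base => intro _; exact le_refl _
    | succ b hab ih =>
      intro hb
      exact le_trans (le_of_lt (step b hb).2) (ih (by omega))
  have claim : ∀ a b, a ≤ b → b + 1 ≤ l →
      delta (E a) (E (b+1)) = delta (E a) (E (a+1)) := by
    intro a b hab
    induction b, hab using Nat.le_induction with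
    | base => intro _; rfl
    | succ b hab ih =>
      intro hb
      have h1 : bval (E a) < bval (E (b+1)) := hmono _ _ (by omega) (by omega)
      have h2 : bval (E (b+1)) < bval (E (b+2)) := hmono _ _ (by omega) (by omega)
      have hmax := (delta_three h1 h2).2
      rw [ih (by omega)] at hmax
      show delta (E a) (E (b+2)) = delta (E a) (E (a+1))
      rw [hmax, max_eq_left (le_trans ((step b hb).2.le) (dmono a b hab (by omega)))]
  apply make_clique G hfree (fun m => delta (E m) (E (m+1)))
  intro i j hij hj
  have h := hcol i j (j+1) hij (by omega) hj
  have hdel : delta (E i) (E j) = delta (E i) (E (i+1)) := by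
    obtain ⟨b, rfl⟩ : ∃ b, j = b + 1 := ⟨j - 1, by omega⟩
    exact claim i b (by omega) (by omega)
  rw [colour] at h
  split_ifs at h with h1 h2
  · exact absurd h (by decide)
  · rw [hdel] at h1; exact h1
  · exact absurd h (by decide)

lemma exists_enum {n l : ℕ} (S : Finset (Fin n → Bool)) (hcard : S.card = l + 1) :
    ∃ E : ℕ → (Fin n → Bool), (∀ m, m ≤ l → E m ∈ S) ∧
      ∀ i j, i < j → j ≤ l → bval (E i) < bval (E j) := by
  classical
  let r : (Fin n → Bool) → (Fin n → Bool) → Prop := fun a b => bval a ≤ bval b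
  haveI : DecidableRel r := fun a b => Nat.decLe _ _
  haveI : IsTrans _ r := ⟨fun a b c => le_trans⟩
  haveI : IsAntisymm _ r := ⟨fun a b h1 h2 => bval_injective (le_antisymm h1 h2)⟩
  haveI : IsTotal _ r := ⟨fun a b => le_total _ _⟩
  set L := S.sort r with hL
  have hlen : L.length = l + 1 := by rw [hL, Finset.length_sort, hcard]
  refine ⟨fun m => L.getD m (fun _ => false), ?_, ?_⟩
  · intro m hm
    have hm' : m < L.length := by omega
    show L.getD m (fun _ => false) ∈ S
    rw [List.getD_eq_getElem _ _ hm']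
    exact (Finset.mem_sort r).mp (L.getElem_mem _)
  · intro i j hij hj
    have hi' : i < L.length := by omega
    have hj' : j < L.length := by omega
    have hs : L.Pairwise r := S.pairwise_sort r
    have hr : r (L.get ⟨i, hi'⟩) (L.get ⟨j, hj'⟩) := by
      apply List.Pairwise.rel_get_of_lt hs
      simpa using hij
    have hne : L.get ⟨i, hi'⟩ ≠ L.get ⟨j, hj'⟩ := by
      intro he
      have := (List.Nodup.get_inj_iff (S.sort_nodup r)).mp he
      simp only [Fin.mk.injEq] at this
      omega
    show bval (L.getD i (fun _ => false)) < bval (L.getD j (fun _ => false))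
    rw [List.getD_eq_getElem _ _ hi', List.getD_eq_getElem _ _ hj']
    rw [List.get_eq_getElem, List.get_eq_getElem] at hr hne
    exact lt_of_le_of_ne hr (fun h => hne (bval_injective h))


/-- If `G` is a simple graph on `{1,…,n}` with no clique of size `l`, then in the
stepping-up 3-colouring of the triples of `T = {0,1}ⁿ`, neither colour class `C₁`
nor colour class `C₂` contains a monochromatic clique of size `l + 1`. -/
theorem colours_one_two_no_clique {n l : ℕ} (G : SimpleGraph ℕ)
    (hG : ∀ a b, G.Adj a b → a < n ∧ b < n) (hfree : G.CliqueFree l) :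
    (¬ ∃ S : Finset (Fin n → Bool), S.card = l + 1 ∧
        ∀ ε₁ ε₂ ε₃, ε₁ ∈ S → ε₂ ∈ S → ε₃ ∈ S →
          bval ε₁ < bval ε₂ → bval ε₂ < bval ε₃ →
            colour G ε₁ ε₂ ε₃ = 0) ∧
      ¬ ∃ S : Finset (Fin n → Bool), S.card = l + 1 ∧
        ∀ ε₁ ε₂ ε₃, ε₁ ∈ S → ε₂ ∈ S → ε₃ ∈ S →
          bval ε₁ < bval ε₂ → bval ε₂ < bval ε₃ →
            colour G ε₁ ε₂ ε₃ = 1 := by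
  constructor
  · rintro ⟨S, hcard, hcol⟩
    obtain ⟨E, hmem, hmono⟩ := exists_enum S hcard
    exact aux0 G hfree E hmono fun i j k hij hjk hk =>
      hcol _ _ _ (hmem i (by omega)) (hmem j (by omega)) (hmem k hk)
        (hmono i j hij (by omega)) (hmono j k hjk hk)
  · rintro ⟨S, hcard, hcol⟩
    obtain ⟨E, hmem, hmono⟩ := exists_enum S hcard
    exact aux1 G hfree E hmono fun i j k hij hjk hk =>
      hcol _ _ _ (hmem i (by omega)) (hmem j (by omega)) (hmem k hk)
        (hmono i j hij (by omega)) (hmono j k hjk hk)
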